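/- Let p, q ≥ 1 be coprime integers and let ℓ > 0 be a rational number such that the lattice Λ_{ℓp, ℓq} = {(m·ℓp, n·ℓq) : m, n ∈ ℤ} is disjoint from D′. Then for every integer r ≥ 1, setting λ = 1 + (ℓ − 1)/r, the lattice Λ_{λp, λq} = {(m·λp, n·λq) : m, n ∈ ℤ} is disjoint from D′. -/

import Mathlib

/-!
If `ℓ = r μ - (r - 1)` with `r ≥ 1` an integer, then for integers `b < a` the map
`(a μ, b μ) ↦ (a ℓ, b ℓ)` sends a point of `D′` lying over the unit square at `k` to a point
lying over the unit square at `k' = r k - (r - 1) b`: indeed `b ℓ - k' = r (b μ - k) > 0` and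
`a ℓ - k' = r (a μ - k) - (r - 1)(a - b) ≤ r - (r - 1) = 1`, while `b ℓ < a ℓ`. Since `D′` is
symmetric under `z ↦ -z`, the case `a < b` reduces to this one; taking `a = m p`, `b = n q`
turns a point of `Λ_{μp, μq}` in `D′` into a point of `Λ_{ℓp, ℓq}` in `D′`.
-/

/-- The punctured enlarged diagonal set `D′`. -/
def Dprime : Set (ℝ × ℝ) :=
  ⋃ n : ℤ, {p : ℝ × ℝ | (n : ℝ) ≤ p.1 ∧ p.1 ≤ (n : ℝ) + 1 ∧
    (n : ℝ) < p.2 ∧ p.2 < (n : ℝ) + 1 ∧ p.1 ≠ p.2}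

/-- The rectangular lattice `Λ_{μ,ν}`. -/
def RectLat (μ ν : ℝ) : Set (ℝ × ℝ) :=
  {p : ℝ × ℝ | ∃ m n : ℤ, p = ((m : ℝ) * μ, (n : ℝ) * ν)}

lemma mem_Dprime_iff {x y : ℝ} :
    (x, y) ∈ Dprime ↔ ∃ k : ℤ, (k : ℝ) ≤ x ∧ x ≤ k + 1 ∧ (k : ℝ) < y ∧ y < k + 1 ∧ x ≠ y := by
  simp [Dprime]

lemma neg_mem_Dprime {x y : ℝ} (h : (x, y) ∈ Dprime) : (-x, -y) ∈ Dprime := by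
  obtain ⟨k, hkx, hxk, hky, hyk, hxy⟩ := mem_Dprime_iff.1 h
  refine mem_Dprime_iff.2 ⟨-k - 1, ?_, ?_, ?_, ?_, neg_injective.ne hxy⟩ <;> push_cast <;> linarith

section Contraction

variable {ℓ μ : ℝ} {r : ℤ}

lemma mem_Dprime_mul_of_lt (hℓ : 0 < ℓ) (hr : 1 ≤ r) (hℓμ : ℓ = r * μ - (r - 1)) {a b : ℤ}
    (hba : b < a) (h : ((a : ℝ) * μ, (b : ℝ) * μ) ∈ Dprime) :
    ((a : ℝ) * ℓ, (b : ℝ) * ℓ) ∈ Dprime := by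
  obtain ⟨k, -, hak, hkb, -, -⟩ := mem_Dprime_iff.1 h
  have hr' : (1 : ℝ) ≤ r := by exact_mod_cast hr
  have hba' : (b : ℝ) + 1 ≤ a := by exact_mod_cast hba
  set k' : ℤ := r * k - (r - 1) * b
  have hb : (b : ℝ) * ℓ - k' = r * (b * μ - k) := by
    simp only [k', hℓμ]; push_cast; ring
  have ha : (a : ℝ) * ℓ - k' = r * (a * μ - k) - (r - 1) * (a - b) := by
    simp only [k', hℓμ]; push_cast; ring
  have hk'b : (k' : ℝ) < b * ℓ := by
    have : 0 < (r : ℝ) * (b * μ - k) := mul_pos (by linarith) (by linarith)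
    linarith
  have hak' : (a : ℝ) * ℓ ≤ k' + 1 := by
    have : (r : ℝ) * (a * μ - k) ≤ r := by nlinarith
    have : (r - 1 : ℝ) ≤ (r - 1) * (a - b) := by nlinarith
    linarith
  have hba_ℓ : (b : ℝ) * ℓ < a * ℓ := mul_lt_mul_of_pos_right (by exact_mod_cast hba) hℓ
  exact mem_Dprime_iff.2 ⟨k', by linarith, hak', hk'b, by linarith, hba_ℓ.ne'⟩

lemma mem_Dprime_mul (hℓ : 0 < ℓ) (hr : 1 ≤ r) (hℓμ : ℓ = r * μ - (r - 1)) {a b : ℤ}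
    (h : ((a : ℝ) * μ, (b : ℝ) * μ) ∈ Dprime) :
    ((a : ℝ) * ℓ, (b : ℝ) * ℓ) ∈ Dprime := by
  rcases lt_trichotomy b a with hba | rfl | hab
  · exact mem_Dprime_mul_of_lt hℓ hr hℓμ hba h
  · obtain ⟨_, -, -, -, -, hne⟩ := mem_Dprime_iff.1 h
    exact absurd rfl hne
  · have hneg := mem_Dprime_mul_of_lt hℓ hr hℓμ (neg_lt_neg hab)
      (by push_cast; simpa only [neg_mul] using neg_mem_Dprime h)
    push_cast at hneg
    simpa only [neg_mul, neg_neg] using neg_mem_Dprime hneg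

end Contraction

theorem rational_diagonal_contraction_general (p q : ℤ)
    (ℓ : ℚ) (hℓ : 0 < ℓ)
    (h : Disjoint (RectLat ((ℓ : ℝ) * (p : ℝ)) ((ℓ : ℝ) * (q : ℝ))) Dprime)
    (r : ℤ) (hr : 1 ≤ r) :
    Disjoint (RectLat ((1 + ((ℓ : ℝ) - 1) / (r : ℝ)) * (p : ℝ))
                  ((1 + ((ℓ : ℝ) - 1) / (r : ℝ)) * (q : ℝ))) Dprime := by
  set μ : ℝ := 1 + ((ℓ : ℝ) - 1) / r
  have hr0 : (r : ℝ) ≠ 0 := by exact_mod_cast (by omega : r ≠ 0)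
  have hℓμ : (ℓ : ℝ) = r * μ - (r - 1) := by simp only [μ]; field_simp; ring
  rw [Set.disjoint_left] at h ⊢
  rintro _ ⟨m, n, rfl⟩ hmem
  have hmem' : (((m * p : ℤ) : ℝ) * μ, ((n * q : ℤ) : ℝ) * μ) ∈ Dprime := by
    convert hmem using 2 <;> push_cast <;> ring
  refine h ⟨m, n, rfl⟩ ?_
  convert mem_Dprime_mul (by exact_mod_cast hℓ) hr hℓμ hmem' using 2 <;> push_cast <;> ring

theorem rational_diagonal_contraction (p q : ℤ) (hp : 1 ≤ p) (hq : 1 ≤ q)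
    (hpq : IsCoprime p q) (ℓ : ℚ) (hℓ : 0 < ℓ)
    (h : Disjoint (RectLat ((ℓ : ℝ) * (p : ℝ)) ((ℓ : ℝ) * (q : ℝ))) Dprime)
    (r : ℤ) (hr : 1 ≤ r) :
    Disjoint (RectLat ((1 + ((ℓ : ℝ) - 1) / (r : ℝ)) * (p : ℝ))
                  ((1 + ((ℓ : ℝ) - 1) / (r : ℝ)) * (q : ℝ))) Dprime :=
  rational_diagonal_contraction_general p q ℓ hℓ h r hr
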